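/- Let E be a directed graph, let v be a vertex lying on an extreme cycle c, and let C be the cluster of v. Then the element ccc… of E^{≤∞} contains v; any p ∈ E^{≤∞} with v ∈ p⁰ satisfies p ∼ ccc…; C = T(c⁰) = T(C); and the saturated closure of C equals the saturated closure of {u} for any u ∈ T(c⁰). -/

import Mathlib

/-- A directed graph: vertices, edges, source and range maps. -/
structure DGraph where
  V : Type
  Ed : Type
  s : Ed → V
  r : Ed → V

namespace DGraph

variable (E : DGraph)

/-- One-step adjacency: there is an edge from `u` to `v`. -/
def Adj (u v : E.V) : Prop := ∃ e, E.s e = u ∧ E.r e = v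

/-- `u ≥ v`: there is a (finite) path from `u` to `v`. -/
def Reaches (u v : E.V) : Prop := Relation.ReflTransGen E.Adj u v

/-- The tree `T(W)` of a set of vertices. -/
def tree (W : Set E.V) : Set E.V := {u | ∃ v ∈ W, E.Reaches v u}

/-- The root `R(W)` of a set of vertices. -/
def root (W : Set E.V) : Set E.V := {u | ∃ v ∈ W, E.Reaches u v}

/-- The set of edges emitted by `v`. -/
def emits (v : E.V) : Set E.Ed := {e | E.s e = v}

/-- A sink emits no edges. -/
def IsSink (v : E.V) : Prop := E.emits v = ∅

/-- An infinite emitter emits infinitely many edges. -/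
def IsInfEmitter (v : E.V) : Prop := (E.emits v).Infinite

/-- A regular vertex is neither a sink nor an infinite emitter. -/
def IsRegular (v : E.V) : Prop := (E.emits v).Nonempty ∧ (E.emits v).Finite

/-- A hereditary set of vertices: `T(H) ⊆ H`. -/
def Hereditary (H : Set E.V) : Prop := ∀ u ∈ H, ∀ v, E.Reaches u v → v ∈ H

/-- A saturated set of vertices. -/
def Saturated (H : Set E.V) : Prop :=
  ∀ v, E.IsRegular v → (∀ e ∈ E.emits v, E.r e ∈ H) → v ∈ H

/-- The saturated closure of `W`: the smallest hereditary and saturated set containing `W`. -/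
def satClosure (W : Set E.V) : Set E.V :=
  ⋂₀ {H : Set E.V | E.Hereditary H ∧ E.Saturated H ∧ W ⊆ H}

/-- `es` is a finite walk (path) starting at `u`; `es = []` is the trivial path at `u`. -/
def IsWalkFrom (u : E.V) (es : List E.Ed) : Prop :=
  es.Chain' (fun e f => E.r e = E.s f) ∧ ∀ e ∈ es.head?, E.s e = u

/-- The terminal vertex (range) of the walk `es` starting at `u`. -/
def endVert (u : E.V) (es : List E.Ed) : E.V := es.getLast?.elim u E.r

/-- The set of vertices on the walk `es` starting at `u`. -/
def walkVerts (u : E.V) (es : List E.Ed) : Set E.V :=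
  insert u {v | ∃ e ∈ es, E.r e = v}

/-- An infinite path. -/
def IsInfPath (f : ℕ → E.Ed) : Prop := ∀ n, E.r (f n) = E.s (f (n + 1))

/-- The set of vertices on an infinite path. -/
def infVerts (f : ℕ → E.Ed) : Set E.V := Set.range fun n => E.s (f n)

/-- Elements of `E^{≤∞}`: finite walks or infinite paths. -/
inductive GPath (E : DGraph) : Type where
  | fin : E.V → List E.Ed → GPath E
  | inf : (ℕ → E.Ed) → GPath E

/-- Membership in `E^{≤∞}`: a well-formed finite path ending in a sink or an infinite
emitter, or an infinite path. -/
def gmem : GPath E → Prop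
  | .fin u es => E.IsWalkFrom u es ∧
      (E.IsSink (E.endVert u es) ∨ E.IsInfEmitter (E.endVert u es))
  | .inf f => E.IsInfPath f

/-- `p⁰`, the vertex set of an element of `E^{≤∞}`. -/
def gverts : GPath E → Set E.V
  | .fin u es => E.walkVerts u es
  | .inf f => E.infVerts f

/-- The graph `E` is cofinal. -/
def Cofinal : Prop :=
  ∀ v : E.V, ∀ p : GPath E, E.gmem p → ∃ w ∈ E.gverts p, E.Reaches v w

/-- `es` is a cycle based at `u`. -/
def IsCycle (u : E.V) (es : List E.Ed) : Prop :=
  es ≠ [] ∧ E.IsWalkFrom u es ∧ E.endVert u es = u ∧ (es.map E.s).Nodup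

/-- The cycle `es` (based at `u`) has an exit. -/
def HasExit (u : E.V) (es : List E.Ed) : Prop :=
  ∃ v ∈ E.walkVerts u es, ∃ e, E.s e = v ∧ e ∉ es

/-- An extreme cycle: a cycle with an exit such that `T(c⁰) ⊆ R(c⁰)`. -/
def IsExtremeCycle (u : E.V) (es : List E.Ed) : Prop :=
  E.IsCycle u es ∧ E.HasExit u es ∧
    E.tree (E.walkVerts u es) ⊆ E.root (E.walkVerts u es)

/-- `v` lies on some cycle. -/
def OnCycle (v : E.V) : Prop := ∃ u es, E.IsCycle u es ∧ v ∈ E.walkVerts u es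

/-- A terminal (infinite) path. -/
def IsTerminalPath (f : ℕ → E.Ed) : Prop :=
  E.IsInfPath f ∧
  (∀ v ∈ E.tree (E.infVerts f), ¬ E.IsInfEmitter v ∧ ¬ E.OnCycle v) ∧
  (∀ g : ℕ → E.Ed, E.IsInfPath g → E.s (g 0) ∈ E.infVerts f →
      E.tree (E.infVerts g) ⊆ E.root (E.infVerts g))

/-- A terminal vertex: a sink, a vertex on a cycle without exits, a vertex on an
extreme cycle, or a vertex on a terminal path. -/
def IsTerminalVert (v : E.V) : Prop :=
  E.IsSink v ∨
  (∃ u es, E.IsCycle u es ∧ ¬ E.HasExit u es ∧ v ∈ E.walkVerts u es) ∨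
  (∃ u es, E.IsExtremeCycle u es ∧ v ∈ E.walkVerts u es) ∨
  (∃ f, E.IsTerminalPath f ∧ v ∈ E.infVerts f)

/-- `p ∼ q` for elements of `E^{≤∞}`: `R(p⁰) = R(q⁰)`. -/
def pequiv (p q : GPath E) : Prop := E.root (E.gverts p) = E.root (E.gverts q)

/-- `v ≈ w` for terminal vertices. -/
def approx (v w : E.V) : Prop :=
  E.IsTerminalVert v ∧ E.IsTerminalVert w ∧
  ∃ p q : GPath E, E.gmem p ∧ E.gmem q ∧ v ∈ E.gverts p ∧ w ∈ E.gverts q ∧ E.pequiv p q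

/-- The cluster of a terminal vertex `v`: its `≈`-equivalence class. -/
def cluster (v : E.V) : Set E.V := {w | E.approx v w}

/-- `C` is a cluster of `E`. -/
def IsCluster (C : Set E.V) : Prop := ∃ v, E.IsTerminalVert v ∧ C = E.cluster v

/-- `Ter(E)`: the saturated closure of the set of terminal vertices. -/
def Ter : Set E.V := E.satClosure {v | E.IsTerminalVert v}

/-- The set `B_H` of breaking vertices of a (hereditary and saturated) set `H`. -/
def breaking (H : Set E.V) : Set E.V :=
  {v | v ∉ H ∧ E.IsInfEmitter v ∧
    {e | E.s e = v ∧ E.r e ∉ H}.Nonempty ∧ {e | E.s e = v ∧ E.r e ∉ H}.Finite}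

/-- `(H, S)` is an admissible pair. -/
def Admissible (H S : Set E.V) : Prop :=
  E.Hereditary H ∧ E.Saturated H ∧ S ⊆ E.breaking H

end DGraph
namespace DGraph

/-- The infinite path `ccc…` obtained by repeating the cycle `es`. -/
def cycleRep (E : DGraph) (es : List E.Ed) (h : es ≠ []) : ℕ → E.Ed :=
  fun n => es.get ⟨n % es.length, Nat.mod_lt _ (List.length_pos_iff.mpr h)⟩

end DGraph

/-! For a cycle `c` based at `u`, `T(c⁰)` is the set of vertices reachable from `u` and `R(c⁰)`
the set of vertices reaching `u`; extremality says that everything reachable from `u` reaches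
`u` back. Hence every `w ∈ T(c⁰)` lies on a closed walk through `u`, from which a cycle through
`w` can be extracted; it has an exit because a cycle without exits cannot reach one with an exit,
so it is again extreme, with the same root as `c`.

The vertices of any `p ∈ E^{≤∞}` are linearly ordered by reachability, so if `v ∈ p⁰` each of
them either reaches `v` or lies in `T(c⁰) ⊆ R(c⁰)`; thus `R(p⁰) = R(c⁰)`. A terminal vertex
reaching `u` is reached back from `u`: sinks and cycles without exits cannot reach `c`, and the
tree of a terminal path contains no cycle. This identifies the cluster of `v` with `T(c⁰)`, and
`T(c⁰) = T({w})` for every `w ∈ T(c⁰)`. -/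

namespace DGraph

variable {E : DGraph}

protected lemma Reaches.refl (a : E.V) : E.Reaches a a := Relation.ReflTransGen.refl

protected lemma Reaches.trans {a b c : E.V} (hab : E.Reaches a b) (hbc : E.Reaches b c) :
    E.Reaches a c :=
  Relation.ReflTransGen.trans hab hbc

lemma Adj.reaches {a b : E.V} (h : E.Adj a b) : E.Reaches a b := Relation.ReflTransGen.single h

lemma IsSink.eq_of_reaches {a b : E.V} (hs : E.IsSink a) (h : E.Reaches a b) : a = b := by
  rcases Relation.ReflTransGen.cases_head h with rfl | ⟨c, ⟨e, hse, -⟩, -⟩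
  · rfl
  · exact absurd (hs ▸ hse : e ∈ (∅ : Set E.Ed)) (Set.notMem_empty e)

lemma tree_tree (W : Set E.V) : E.tree (E.tree W) = E.tree W := by
  ext x
  constructor
  · rintro ⟨y, ⟨w, hw, hwy⟩, hyx⟩
    exact ⟨w, hw, hwy.trans hyx⟩
  · intro hx
    exact ⟨x, hx, Reaches.refl x⟩

lemma tree_singleton (w : E.V) : E.tree {w} = {x | E.Reaches w x} := by
  simp [tree]

lemma isWalkFrom_nil (u : E.V) : E.IsWalkFrom u [] := ⟨List.isChain_nil, by simp⟩

lemma isWalkFrom_cons {u : E.V} {e : E.Ed} {l : List E.Ed} :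
    E.IsWalkFrom u (e :: l) ↔ E.s e = u ∧ E.IsWalkFrom (E.r e) l := by
  constructor
  · rintro ⟨hchain, hhead⟩
    obtain ⟨hnext, hl⟩ := List.isChain_cons.mp hchain
    exact ⟨hhead e rfl, hl, fun f hf => (hnext f hf).symm⟩
  · rintro ⟨he, hl, hnext⟩
    refine ⟨List.isChain_cons.mpr ⟨fun f hf => (hnext f hf).symm, hl⟩, ?_⟩
    rintro f ⟨⟩
    exact he

lemma endVert_cons (u : E.V) (e : E.Ed) (l : List E.Ed) :
    E.endVert u (e :: l) = E.endVert (E.r e) l := by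
  cases l <;> simp [endVert, List.getLast?_cons]

lemma walkVerts_cons (u : E.V) (e : E.Ed) (l : List E.Ed) :
    E.walkVerts u (e :: l) = insert u (E.walkVerts (E.r e) l) := by
  ext x
  simp only [walkVerts, Set.mem_insert_iff, Set.mem_ofPred_eq, List.mem_cons, exists_eq_or_imp]
  tauto

lemma mem_walkVerts_self (u : E.V) (l : List E.Ed) : u ∈ E.walkVerts u l := Set.mem_insert _ _

lemma endVert_append_cons (u u' : E.V) (l₁ l₂ : List E.Ed) (f : E.Ed) :
    E.endVert u (l₁ ++ f :: l₂) = E.endVert u' (f :: l₂) := by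
  simp [endVert, List.getLast?_append, List.getLast?_cons]

lemma IsWalkFrom.reaches {u x : E.V} {l : List E.Ed} (h : E.IsWalkFrom u l)
    (hx : x ∈ E.walkVerts u l) : E.Reaches u x ∧ E.Reaches x (E.endVert u l) := by
  induction l generalizing u x with
  | nil =>
    obtain rfl : x = u := by simpa [walkVerts] using hx
    exact ⟨Reaches.refl x, Reaches.refl x⟩
  | cons e l ih =>
    obtain ⟨hse, hl⟩ := isWalkFrom_cons.mp h
    have hadj : E.Adj u (E.r e) := ⟨e, hse, rfl⟩
    rw [walkVerts_cons] at hx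
    rw [endVert_cons]
    rcases hx with rfl | hx
    · exact ⟨Reaches.refl _, hadj.reaches.trans (ih hl (mem_walkVerts_self (E.r e) l)).2⟩
    · exact ⟨hadj.reaches.trans (ih hl hx).1, (ih hl hx).2⟩

lemma IsWalkFrom.reaches_or_reaches {u x y : E.V} {l : List E.Ed} (h : E.IsWalkFrom u l)
    (hx : x ∈ E.walkVerts u l) (hy : y ∈ E.walkVerts u l) :
    E.Reaches x y ∨ E.Reaches y x := by
  induction l generalizing u with
  | nil =>
    obtain rfl : x = u := by simpa [walkVerts] using hx
    obtain rfl : y = x := by simpa [walkVerts] using hy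
    exact Or.inl (Reaches.refl y)
  | cons e l ih =>
    obtain ⟨hse, hl⟩ := isWalkFrom_cons.mp h
    have hadj : E.Adj u (E.r e) := ⟨e, hse, rfl⟩
    rw [walkVerts_cons] at hx hy
    rcases hx with rfl | hx <;> rcases hy with rfl | hy
    · exact Or.inl (Reaches.refl _)
    · exact Or.inl (hadj.reaches.trans (hl.reaches hy).1)
    · exact Or.inr (hadj.reaches.trans (hl.reaches hx).1)
    · exact ih hl hx hy

lemma IsWalkFrom.walkVerts_eq {u : E.V} {l : List E.Ed} (h : E.IsWalkFrom u l) :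
    E.walkVerts u l = insert (E.endVert u l) {x | ∃ e ∈ l, E.s e = x} := by
  induction l generalizing u with
  | nil => simp [walkVerts, endVert]
  | cons e l ih =>
    obtain ⟨hse, hl⟩ := isWalkFrom_cons.mp h
    rw [walkVerts_cons, ih hl, endVert_cons]
    ext x
    simp only [Set.mem_insert_iff, Set.mem_ofPred_eq, List.mem_cons, exists_eq_or_imp, hse]
    tauto

lemma IsInfPath.reaches {f : ℕ → E.Ed} (h : E.IsInfPath f) {m n : ℕ} (hmn : m ≤ n) :
    E.Reaches (E.s (f m)) (E.s (f n)) := by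
  induction n, hmn using Nat.le_induction with
  | base => exact Reaches.refl _
  | succ n _ ih => exact ih.trans (Adj.reaches ⟨f n, rfl, h n⟩)

lemma exists_walk_nodup_of_reaches {a b : E.V} (h : E.Reaches a b) :
    ∃ l, E.IsWalkFrom a l ∧ E.endVert a l = b ∧ (b :: l.map E.s).Nodup := by
  induction h using Relation.ReflTransGen.head_induction_on with
  | refl => exact ⟨[], isWalkFrom_nil _, rfl, by simp⟩
  | @head a c hadj _ ih =>
    obtain ⟨e, hse, hre⟩ := hadj
    obtain ⟨l, hw, hend, hnd⟩ := ih
    by_cases ha : a ∈ b :: l.map E.s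
    · rcases List.mem_cons.mp ha with rfl | ha
      · exact ⟨[], isWalkFrom_nil _, rfl, by simp⟩
      -- the walk revisits `a`: keep only the part after the visit
      obtain ⟨f, hf, hsf⟩ := List.mem_map.mp ha
      obtain ⟨l₁, l₂, rfl⟩ := List.append_of_mem hf
      refine ⟨f :: l₂, ⟨hw.1.right_of_append, ?_⟩, ?_, ?_⟩
      · rintro g ⟨⟩
        exact hsf
      · rw [← hend, endVert_append_cons]
      · exact (((List.sublist_append_right l₁ _).map E.s).cons_cons b).nodup hnd
    · refine ⟨e :: l, isWalkFrom_cons.mpr ⟨hse, hre ▸ hw⟩,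
        by rw [endVert_cons, hre, hend], ?_⟩
      rw [List.map_cons, hse]
      exact (List.Perm.swap a b _).nodup_iff.mpr (List.nodup_cons.mpr ⟨ha, hnd⟩)

lemma exists_isCycle_of_transGen {w : E.V} (h : Relation.TransGen E.Adj w w) :
    ∃ es, E.IsCycle w es := by
  obtain ⟨c, ⟨e, hse, hre⟩, hcw⟩ := Relation.TransGen.head'_iff.mp h
  obtain ⟨l, hw, hend, hnd⟩ := exists_walk_nodup_of_reaches hcw
  refine ⟨e :: l, List.cons_ne_nil _ _, isWalkFrom_cons.mpr ⟨hse, hre ▸ hw⟩,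
    by rw [endVert_cons, hre, hend], ?_⟩
  rwa [List.map_cons, hse]

namespace IsCycle

variable {u : E.V} {es : List E.Ed}

lemma reaches_of_mem (hc : E.IsCycle u es) {x : E.V} (hx : x ∈ E.walkVerts u es) :
    E.Reaches u x ∧ E.Reaches x u := by
  simpa only [hc.2.2.1] using hc.2.1.reaches hx

lemma tree_walkVerts (hc : E.IsCycle u es) : E.tree (E.walkVerts u es) = {x | E.Reaches u x} := by
  ext x
  constructor
  · rintro ⟨y, hy, hyx⟩
    exact (hc.reaches_of_mem hy).1.trans hyx
  · exact fun hx => ⟨u, mem_walkVerts_self u es, hx⟩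

lemma root_walkVerts (hc : E.IsCycle u es) : E.root (E.walkVerts u es) = {x | E.Reaches x u} := by
  ext x
  constructor
  · rintro ⟨y, hy, hxy⟩
    exact hxy.trans (hc.reaches_of_mem hy).2
  · exact fun hx => ⟨u, mem_walkVerts_self u es, hx⟩

lemma transGen (hc : E.IsCycle u es) : Relation.TransGen E.Adj u u := by
  obtain ⟨hne, hw, hend, -⟩ := hc
  obtain ⟨e, l, rfl⟩ := List.exists_cons_of_ne_nil hne
  obtain ⟨hse, hl⟩ := isWalkFrom_cons.mp hw
  rw [endVert_cons] at hend
  exact Relation.TransGen.head' ⟨e, hse, rfl⟩ (hend ▸ (hl.reaches (mem_walkVerts_self _ _)).2)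

lemma walkVerts_eq (hc : E.IsCycle u es) : E.walkVerts u es = {x | ∃ e ∈ es, E.s e = x} := by
  obtain ⟨hne, hw, hend, -⟩ := hc
  obtain ⟨e, l, rfl⟩ := List.exists_cons_of_ne_nil hne
  rw [hw.walkVerts_eq, hend, Set.insert_eq_of_mem]
  exact ⟨e, List.mem_cons_self, (isWalkFrom_cons.mp hw).1⟩

lemma r_getElem_eq_s_getElem_mod (hc : E.IsCycle u es) {i : ℕ} (hi : i < es.length) :
    E.r es[i] = E.s (es[(i + 1) % es.length]'(Nat.mod_lt _ (by omega))) := by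
  rcases Nat.lt_or_ge (i + 1) es.length with hlt | hge
  · simp only [Nat.mod_eq_of_lt hlt]
    exact List.isChain_iff_getElem.mp hc.2.1.1 i hlt
  · have hlen : i + 1 = es.length := by omega
    have hlast : E.r es[i] = u := by
      rw [← hc.2.2.1]
      simp [endVert, List.getLast?_eq_getElem?, ← hlen]
    simp only [hlen, Nat.mod_self, hlast]
    exact (hc.2.1.2 _ (List.head?_eq_getElem? ▸ List.getElem?_eq_getElem (by omega))).symm

end IsCycle

lemma isInfPath_cycleRep {u : E.V} {es : List E.Ed} (hc : E.IsCycle u es) :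
    E.IsInfPath (E.cycleRep es hc.1) := by
  intro n
  simp only [cycleRep, List.get_eq_getElem, hc.r_getElem_eq_s_getElem_mod, Nat.mod_add_mod]

lemma infVerts_cycleRep {u : E.V} {es : List E.Ed} (hc : E.IsCycle u es) :
    E.infVerts (E.cycleRep es hc.1) = E.walkVerts u es := by
  rw [hc.walkVerts_eq]
  ext x
  constructor
  · rintro ⟨n, rfl⟩
    exact ⟨_, List.get_mem _ _, rfl⟩
  · rintro ⟨e, he, rfl⟩
    obtain ⟨i, hi, rfl⟩ := List.getElem_of_mem he
    exact ⟨i, by simp [cycleRep, Nat.mod_eq_of_lt hi]⟩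

lemma mem_of_not_hasExit {u : E.V} {es : List E.Ed} (h : ¬E.HasExit u es) {e : E.Ed}
    (he : E.s e ∈ E.walkVerts u es) : e ∈ es := by
  by_contra hne
  exact h ⟨_, he, e, rfl, hne⟩

lemma hereditary_walkVerts_of_not_hasExit {u : E.V} {es : List E.Ed} (h : ¬E.HasExit u es) :
    E.Hereditary (E.walkVerts u es) := by
  intro a ha b hab
  induction hab with
  | refl => exact ha
  | tail _ hadj ih =>
    obtain ⟨e, hse, rfl⟩ := hadj
    exact Set.mem_insert_of_mem _ ⟨e, mem_of_not_hasExit h (hse ▸ ih), rfl⟩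

/-- The exit vertex would lie on the first cycle, which would then contain two edges with the
same source. -/
lemma IsCycle.not_reaches_of_not_hasExit {u₀ u x : E.V} {es₀ es : List E.Ed}
    (hc₀ : E.IsCycle u₀ es₀) (hno : ¬E.HasExit u₀ es₀) (hx : x ∈ E.walkVerts u₀ es₀)
    (hc : E.IsCycle u es) (hexit : E.HasExit u es) : ¬E.Reaches x u := by
  intro hxu
  have hered := hereditary_walkVerts_of_not_hasExit hno
  obtain ⟨y, hy, e, hse, he⟩ := hexit
  have hy₀ : y ∈ E.walkVerts u₀ es₀ := hered u (hered x hx u hxu) y (hc.reaches_of_mem hy).1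
  obtain ⟨f, hf, hsf⟩ : ∃ f ∈ es, E.s f = y := by rwa [hc.walkVerts_eq] at hy
  have hef : e = f := List.inj_on_of_nodup_map hc₀.2.2.2
    (mem_of_not_hasExit hno (hse ▸ hy₀)) (mem_of_not_hasExit hno (hsf ▸ hy₀))
    (hse.trans hsf.symm)
  exact he (hef ▸ hf)

lemma reaches_or_reaches_of_gmem {p : GPath E} (hp : E.gmem p) {x y : E.V}
    (hx : x ∈ E.gverts p) (hy : y ∈ E.gverts p) : E.Reaches x y ∨ E.Reaches y x := by
  cases p with
  | fin a l => exact hp.1.reaches_or_reaches hx hy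
  | inf f =>
    obtain ⟨m, rfl⟩ := hx
    obtain ⟨n, rfl⟩ := hy
    rcases le_total m n with hmn | hnm
    · exact Or.inl (hp.reaches hmn)
    · exact Or.inr (hp.reaches hnm)

lemma Hereditary.tree_subset_iff {H W : Set E.V} (hH : E.Hereditary H) :
    E.tree W ⊆ H ↔ W ⊆ H :=
  ⟨fun h x hx => h ⟨x, hx, Reaches.refl x⟩, fun h _ ⟨w, hw, hwx⟩ => hH w (h hw) _ hwx⟩

lemma satClosure_tree (W : Set E.V) : E.satClosure (E.tree W) = E.satClosure W := by
  simp only [satClosure]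
  congr 1
  ext H
  exact and_congr_right fun hH => and_congr_right fun _ => hH.tree_subset_iff

namespace IsExtremeCycle

variable {u : E.V} {es : List E.Ed}

lemma reaches_of_reaches (hc : E.IsExtremeCycle u es) {w : E.V} (h : E.Reaches u w) :
    E.Reaches w u := by
  have hext := hc.2.2
  rw [hc.1.tree_walkVerts, hc.1.root_walkVerts] at hext
  exact hext h

lemma tree_walkVerts_eq_tree_singleton (hc : E.IsExtremeCycle u es) {w : E.V}
    (hw : w ∈ E.tree (E.walkVerts u es)) : E.tree (E.walkVerts u es) = E.tree {w} := by
  rw [hc.1.tree_walkVerts] at hw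
  rw [hc.1.tree_walkVerts, tree_singleton]
  ext x
  exact ⟨(hc.reaches_of_reaches hw).trans, hw.trans⟩

lemma exists_isExtremeCycle_of_reaches (hc : E.IsExtremeCycle u es) {w : E.V}
    (h : E.Reaches u w) : ∃ es', E.IsExtremeCycle w es' := by
  have hwu := hc.reaches_of_reaches h
  obtain ⟨es', hc'⟩ := exists_isCycle_of_transGen
    ((Relation.TransGen.trans_right hwu hc.1.transGen).trans_left h)
  refine ⟨es', hc', not_not.mp fun hno => hc'.not_reaches_of_not_hasExit hno
    (mem_walkVerts_self w es') hc.1 hc.2.1 hwu, ?_⟩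
  rw [hc'.tree_walkVerts, hc'.root_walkVerts]
  exact fun x hx => (hc.reaches_of_reaches (h.trans hx)).trans h

lemma root_gverts (hc : E.IsExtremeCycle u es) {v : E.V} (hv : v ∈ E.walkVerts u es)
    {p : GPath E} (hp : E.gmem p) (hvp : v ∈ E.gverts p) :
    E.root (E.gverts p) = {x | E.Reaches x u} := by
  ext x
  constructor
  · rintro ⟨z, hz, hxz⟩
    rcases reaches_or_reaches_of_gmem hp hz hvp with hzv | hvz
    · exact hxz.trans (hzv.trans (hc.1.reaches_of_mem hv).2)
    · exact hxz.trans (hc.reaches_of_reaches ((hc.1.reaches_of_mem hv).1.trans hvz))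
  · exact fun hxu => ⟨v, hvp, hxu.trans (hc.1.reaches_of_mem hv).1⟩

end IsExtremeCycle

lemma IsTerminalVert.reaches_of_reaches {u w : E.V} {es : List E.Ed}
    (hw : E.IsTerminalVert w) (hc : E.IsCycle u es) (hexit : E.HasExit u es)
    (h : E.Reaches w u) : E.Reaches u w := by
  rcases hw with hsink | ⟨u₀, es₀, hc₀, hno, hw₀⟩ | ⟨u₀, es₀, hc₀, hw₀⟩ | ⟨f, hf, hwf⟩
  · obtain rfl := hsink.eq_of_reaches h
    exact Reaches.refl w
  · exact absurd h (hc₀.not_reaches_of_not_hasExit hno hw₀ hc hexit)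
  · have hu₀w := (hc₀.1.reaches_of_mem hw₀).1
    exact (hc₀.reaches_of_reaches (hu₀w.trans h)).trans hu₀w
  · exact absurd ⟨u, es, hc, mem_walkVerts_self u es⟩ (hf.2.1 u ⟨w, hwf, h⟩).2

lemma IsExtremeCycle.cluster_eq {u : E.V} {es : List E.Ed} (hc : E.IsExtremeCycle u es)
    {v : E.V} (hv : v ∈ E.walkVerts u es) : E.cluster v = E.tree (E.walkVerts u es) := by
  rw [hc.1.tree_walkVerts]
  ext w
  constructor
  · rintro ⟨-, hwT, p, q, hp, -, hvp, hwq, hpq⟩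
    have hwu : w ∈ E.root (E.gverts q) := ⟨w, hwq, Reaches.refl w⟩
    rw [← hpq, hc.root_gverts hv hp hvp] at hwu
    exact hwT.reaches_of_reaches hc.1 hc.2.1 hwu
  · intro h
    obtain ⟨es', hc'⟩ := hc.exists_isExtremeCycle_of_reaches h
    have hvc : v ∈ E.infVerts (E.cycleRep es hc.1.1) := (infVerts_cycleRep hc.1).symm ▸ hv
    have hwc : w ∈ E.infVerts (E.cycleRep es' hc'.1.1) :=
      (infVerts_cycleRep hc'.1).symm ▸ mem_walkVerts_self w es'
    refine ⟨.inr (.inr (.inl ⟨u, es, And.intro hc hv⟩)),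
      .inr (.inr (.inl ⟨w, es', And.intro hc' (mem_walkVerts_self w es')⟩)), .inf _, .inf _,
      isInfPath_cycleRep hc.1, isInfPath_cycleRep hc'.1, hvc, hwc, ?_⟩
    show E.root (E.infVerts _) = E.root (E.infVerts _)
    rw [infVerts_cycleRep hc.1, infVerts_cycleRep hc'.1, hc.1.root_walkVerts,
      hc'.1.root_walkVerts]
    ext x
    exact ⟨fun hx => hx.trans h, fun hx => hx.trans (hc.reaches_of_reaches h)⟩

end DGraph

/-- Lemma, extreme cycle case: if `v` lies on an extreme cycle `c`
with cluster `C`, then `ccc… ∈ E^{≤∞}` contains `v`; any `p ∈ E^{≤∞}` with `v ∈ p⁰`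
satisfies `p ∼ ccc…`; `C = T(c⁰) = T(C)`; and `satClosure C = satClosure {u}` for
any `u ∈ T(c⁰)`. -/
theorem cluster_of_extreme_cycle (E : DGraph) (u : E.V) (es : List E.Ed)
    (hc : E.IsExtremeCycle u es) (v : E.V) (hv : v ∈ E.walkVerts u es) :
    (E.gmem (DGraph.GPath.inf (E.cycleRep es hc.1.1)) ∧
      v ∈ E.infVerts (E.cycleRep es hc.1.1)) ∧
    (∀ p : DGraph.GPath E, E.gmem p → v ∈ E.gverts p →
      E.pequiv p (DGraph.GPath.inf (E.cycleRep es hc.1.1))) ∧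
    (E.cluster v = E.tree (E.walkVerts u es) ∧ E.tree (E.cluster v) = E.cluster v) ∧
    (∀ w ∈ E.tree (E.walkVerts u es),
      E.satClosure (E.cluster v) = E.satClosure {w}) := by
  have hinf : E.gmem (.inf (E.cycleRep es hc.1.1)) := DGraph.isInfPath_cycleRep hc.1
  have hmem : v ∈ E.infVerts (E.cycleRep es hc.1.1) :=
    (DGraph.infVerts_cycleRep hc.1).symm ▸ hv
  have hcluster := hc.cluster_eq hv
  refine ⟨⟨hinf, hmem⟩, fun p hp hvp => ?_, ⟨hcluster, hcluster ▸ E.tree_tree _⟩, fun w hw => ?_⟩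
  · exact (hc.root_gverts hv hp hvp).trans (hc.root_gverts hv hinf hmem).symm
  · rw [hcluster, hc.tree_walkVerts_eq_tree_singleton hw, DGraph.satClosure_tree]
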